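/- The chromatic number of the enhanced power graph of a finite group G equals the maximum order of an element of G. -/

import Mathlib

def enhancedPowerGraph (G : Type*) [Group G] : SimpleGraph G where
  Adj x y := x ≠ y ∧ IsCyclic (Subgroup.closure {x, y} : Subgroup G)
  symm := ⟨by
    intro x y ⟨hne, hc⟩
    exact ⟨hne.symm, by rwa [Set.pair_comm]⟩⟩
  loopless := ⟨by intro x ⟨hne, _⟩; exact hne rfl⟩

/-!
Write each element of finite order as `x = g ^ j`, where `g` is a generator of `⟨x⟩` chosen
depending only on `⟨x⟩` and `j < n = orderOf x` is then coprime to `n`, and give `x` the colour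
`⌊j M / n⌋`, where `M` bounds the element orders. Two adjacent elements lie in a common cyclic
subgroup `⟨z⟩`; if their reduced fractions `j / n` and `j' / n'` coincide, they generate the
same subgroup (a cyclic group has one subgroup of each order) and so are equal. Otherwise the
fractions differ by at least `1 / lcm n n' ≥ 1 / orderOf z ≥ 1 / M`, so their colours differ.
Conversely `⟨g⟩` is a clique of size `orderOf g`.
-/

open Subgroup

namespace Nat

theorem Coprime.eq_and_eq_of_mul_eq_mul {j j' n n' : ℕ} (hj : j.Coprime n) (hj' : j'.Coprime n')
    (hn : n ≠ 0) (h : j * n' = j' * n) : n = n' ∧ j = j' := by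
  have hnn' : n = n' := Nat.dvd_antisymm
    (hj.symm.dvd_of_dvd_mul_left ⟨j', by rw [h, mul_comm]⟩)
    (hj'.symm.dvd_of_dvd_mul_left ⟨j, by rw [← h, mul_comm]⟩)
  subst hnn'
  exact ⟨rfl, Nat.eq_of_mul_eq_mul_right (Nat.pos_of_ne_zero hn) h⟩

theorem mul_div_lt_mul_div_of_lcm_le {j j' n n' M : ℕ} (hn : 0 < n) (hn' : 0 < n')
    (hlt : j * n' < j' * n) (hM : lcm n n' ≤ M) : j * M / n < j' * M / n' := by
  have hgap : j * n' + gcd n n' ≤ j' * n := by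
    have hdvd : gcd n n' ∣ j' * n - j * n' :=
      Nat.dvd_sub (dvd_mul_of_dvd_right (gcd_dvd_left n n') j')
        (dvd_mul_of_dvd_right (gcd_dvd_right n n') j)
    have := Nat.le_of_dvd (Nat.sub_pos_of_lt hlt) hdvd
    omega
  have hnn' : n * n' ≤ gcd n n' * M := by
    rw [← gcd_mul_lcm n n']
    exact Nat.mul_le_mul_left _ hM
  have hq : j * M / n * n ≤ j * M := Nat.div_mul_le_self _ _
  rw [← Nat.add_one_le_iff, Nat.le_div_iff_mul_le hn']
  refine Nat.le_of_mul_le_mul_right ?_ hn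
  nlinarith

end Nat

section

variable {G : Type*} [Group G]

theorem isCyclic_closure_pair_iff {x y : G} :
    IsCyclic (closure {x, y} : Subgroup G) ↔ ∃ z, x ∈ zpowers z ∧ y ∈ zpowers z := by
  constructor
  · intro h
    obtain ⟨z, hz⟩ := (Subgroup.isCyclic_iff_exists_zpowers_eq_top _).mp h
    exact ⟨z, hz ▸ subset_closure (by simp), hz ▸ subset_closure (by simp)⟩
  · rintro ⟨z, hx, hy⟩
    have hle : closure {x, y} ≤ zpowers z :=
      closure_le _ |>.mpr (Set.insert_subset_iff.mpr ⟨hx, Set.singleton_subset_iff.mpr hy⟩)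
    exact isCyclic_of_le hle

theorem enhancedPowerGraph_adj_iff {x y : G} :
    (enhancedPowerGraph G).Adj x y ↔ x ≠ y ∧ ∃ z, x ∈ zpowers z ∧ y ∈ zpowers z :=
  and_congr_right' isCyclic_closure_pair_iff

theorem isClique_zpowers (g : G) : (enhancedPowerGraph G).IsClique (zpowers g : Set G) :=
  fun _ hx _ hy hne => enhancedPowerGraph_adj_iff.mpr ⟨hne, g, hx, hy⟩

theorem orderOf_le_chromaticNumber (g : G) :
    (orderOf g : ℕ∞) ≤ (enhancedPowerGraph G).chromaticNumber := by
  classical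
  set s := (Finset.range (orderOf g)).image (g ^ ·)
  have hs : (enhancedPowerGraph G).IsClique (s : Set G) :=
    (isClique_zpowers g).subset (by
      rw [Finset.coe_image]
      rintro _ ⟨k, -, rfl⟩
      exact npow_mem_zpowers g k)
  have hcard : s.card = orderOf g :=
    (Finset.card_image_of_injOn (by simpa using pow_injOn_Iio_orderOf)).trans (Finset.card_range _)
  exact hcard ▸ hs.card_le_chromaticNumber

theorem mem_zpowers_pow_orderOf_div {y z : G} {n : ℕ} (hz : IsOfFinOrder z) (hn : n ∣ orderOf z)
    (hy : y ∈ zpowers z) (hyn : y ^ n = 1) : y ∈ zpowers (z ^ (orderOf z / n)) := by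
  obtain ⟨k, rfl⟩ := hz.mem_powers_iff_mem_zpowers.mpr hy
  have hn0 : n ≠ 0 := by rintro rfl; exact hz.orderOf_pos.ne' (Nat.eq_zero_of_zero_dvd hn)
  have hdvd : orderOf z / n * n ∣ k * n := by
    rw [Nat.div_mul_cancel hn]
    exact orderOf_dvd_of_pow_eq_one (by rwa [pow_mul])
  obtain ⟨m, rfl⟩ := Nat.dvd_of_mul_dvd_mul_right (Nat.pos_of_ne_zero hn0) hdvd
  show z ^ _ ∈ _
  rw [pow_mul]
  exact npow_mem_zpowers _ m

theorem zpowers_eq_of_mem_of_orderOf_eq {x w : G} (hw : IsOfFinOrder w) (hx : x ∈ zpowers w)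
    (h : orderOf x = orderOf w) : zpowers x = zpowers w := by
  have : Finite (zpowers w) :=
    Nat.finite_of_card_ne_zero (by rw [Nat.card_zpowers]; exact hw.orderOf_pos.ne')
  exact eq_of_le_of_card_ge (zpowers_le_of_mem hx) (by rw [Nat.card_zpowers, Nat.card_zpowers, h])

theorem zpowers_eq_zpowers_of_orderOf_eq {x y z : G} (hz : IsOfFinOrder z)
    (hx : x ∈ zpowers z) (hy : y ∈ zpowers z) (h : orderOf x = orderOf y) :
    zpowers x = zpowers y := by
  have hdvd : orderOf x ∣ orderOf z := orderOf_dvd_of_mem_zpowers hx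
  set w := z ^ (orderOf z / orderOf x)
  have hw : orderOf w = orderOf x := orderOf_pow_orderOf_div hz.orderOf_pos.ne' hdvd
  have hxw : x ∈ zpowers w := mem_zpowers_pow_orderOf_div hz hdvd hx (pow_orderOf_eq_one x)
  have hyw : y ∈ zpowers w := mem_zpowers_pow_orderOf_div hz hdvd hy (h ▸ pow_orderOf_eq_one y)
  rw [zpowers_eq_of_mem_of_orderOf_eq hz.pow hxw hw.symm,
    zpowers_eq_of_mem_of_orderOf_eq hz.pow hyw (h ▸ hw.symm)]

noncomputable def cyclicGenerator (x : G) : G :=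
  Classical.epsilon fun g => zpowers g = zpowers x

theorem zpowers_cyclicGenerator (x : G) : zpowers (cyclicGenerator x) = zpowers x :=
  Classical.epsilon_spec (p := fun g => zpowers g = zpowers x) ⟨x, rfl⟩

theorem cyclicGenerator_congr {x y : G} (h : zpowers x = zpowers y) :
    cyclicGenerator x = cyclicGenerator y := by
  unfold cyclicGenerator
  rw [h]

theorem orderOf_cyclicGenerator (x : G) : orderOf (cyclicGenerator x) = orderOf x := by
  rw [← Nat.card_zpowers, ← Nat.card_zpowers, zpowers_cyclicGenerator]

-- Junk unless `x` has finite order.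
noncomputable def cyclicLog (x : G) : ℕ :=
  Classical.epsilon fun k => k < orderOf x ∧ cyclicGenerator x ^ k = x

theorem cyclicLog_spec {x : G} (hx : IsOfFinOrder x) :
    cyclicLog x < orderOf x ∧ cyclicGenerator x ^ cyclicLog x = x := by
  refine Classical.epsilon_spec (p := fun k => k < orderOf x ∧ cyclicGenerator x ^ k = x) ?_
  have hgen : IsOfFinOrder (cyclicGenerator x) := by
    rw [← orderOf_pos_iff, orderOf_cyclicGenerator]
    exact hx.orderOf_pos
  have hmem : x ∈ zpowers (cyclicGenerator x) := by
    rw [zpowers_cyclicGenerator]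
    exact mem_zpowers x
  classical
  obtain ⟨k, hk, hkx⟩ := Finset.mem_image.mp (hgen.mem_zpowers_iff_mem_range_orderOf.mp hmem)
  exact ⟨k, orderOf_cyclicGenerator x ▸ Finset.mem_range.mp hk, hkx⟩

theorem coprime_cyclicLog_orderOf {x : G} (hx : IsOfFinOrder x) :
    (cyclicLog x).Coprime (orderOf x) := by
  have h : cyclicGenerator x ∈ zpowers (cyclicGenerator x ^ cyclicLog x) := by
    rw [(cyclicLog_spec hx).2, ← zpowers_cyclicGenerator]
    exact mem_zpowers _
  rwa [mem_zpowers_pow_iff, orderOf_cyclicGenerator] at h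

theorem cyclicLog_mul_div_ne {x y z : G} {M : ℕ} (hz : IsOfFinOrder z) (hx : x ∈ zpowers z)
    (hy : y ∈ zpowers z) (hne : x ≠ y) (hM : orderOf z ≤ M) :
    cyclicLog x * M / orderOf x ≠ cyclicLog y * M / orderOf y := by
  have hxfin : IsOfFinOrder x := hz.of_mem_zpowers hx
  have hyfin : IsOfFinOrder y := hz.of_mem_zpowers hy
  have hlcm : Nat.lcm (orderOf x) (orderOf y) ≤ M :=
    (Nat.le_of_dvd hz.orderOf_pos
      (Nat.lcm_dvd (orderOf_dvd_of_mem_zpowers hx) (orderOf_dvd_of_mem_zpowers hy))).trans hM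
  have hcross : cyclicLog x * orderOf y ≠ cyclicLog y * orderOf x := by
    intro h
    obtain ⟨horder, hlog⟩ := (coprime_cyclicLog_orderOf hxfin).eq_and_eq_of_mul_eq_mul
      (coprime_cyclicLog_orderOf hyfin) hxfin.orderOf_pos.ne' h
    apply hne
    rw [← (cyclicLog_spec hxfin).2, ← (cyclicLog_spec hyfin).2, hlog,
      cyclicGenerator_congr (zpowers_eq_zpowers_of_orderOf_eq hz hx hy horder)]
  rcases lt_or_gt_of_ne hcross with hlt | hgt
  · exact (Nat.mul_div_lt_mul_div_of_lcm_le hxfin.orderOf_pos hyfin.orderOf_pos hlt hlcm).ne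
  · exact (Nat.mul_div_lt_mul_div_of_lcm_le hyfin.orderOf_pos hxfin.orderOf_pos hgt
      (Nat.lcm_comm (orderOf x) _ ▸ hlcm)).ne'

theorem colorable_enhancedPowerGraph (htors : IsMulTorsion G) {M : ℕ}
    (hM : ∀ g : G, orderOf g ≤ M) : (enhancedPowerGraph G).Colorable M := by
  refine ⟨.mk (fun x => ⟨cyclicLog x * M / orderOf x, ?_⟩) fun {x y} hxy h => ?_⟩
  · have hMpos : 0 < M := (orderOf_one (G := G)).symm.trans_le (hM 1)
    exact Nat.div_lt_of_lt_mul (Nat.mul_lt_mul_of_pos_right (cyclicLog_spec (htors x)).1 hMpos)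
  · obtain ⟨hne, z, hx, hy⟩ := enhancedPowerGraph_adj_iff.mp hxy
    exact cyclicLog_mul_div_ne (htors z) hx hy hne (hM z) (Fin.val_eq_of_eq h)

end

theorem stmt_7 {G : Type*} [Group G] [Fintype G] :
    (enhancedPowerGraph G).chromaticNumber = (Finset.univ.sup (fun g : G => orderOf g) : ℕ) := by
  obtain ⟨g₀, -, hg₀⟩ :=
    Finset.exists_mem_eq_sup Finset.univ Finset.univ_nonempty (fun g : G => orderOf g)
  refine le_antisymm ?_ (hg₀ ▸ orderOf_le_chromaticNumber g₀)
  exact (colorable_enhancedPowerGraph (fun g : G => isOfFinOrder_of_finite g)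
    fun g => Finset.le_sup (Finset.mem_univ g)).chromaticNumber_le
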